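/- Let M ⊆ S_k^n be a normalized (⊓,⊔)-closed set, and for each i let J_i = {x ∈ J(M) : supp x̄ = {i}}. Let i ≠ j, and suppose there exist x' ∈ J_i and y ∈ J_j with x' ≺ y. Then for every x ∈ J_i with x ≠ x', there exists y' ∈ J_j with y' ≠ y and y' ≺ x. -/
import Mathlib


/-- The partial order on `S_k = {0,1,…,k}`: `a ⪯ b` iff `a = 0` or `a = b`. -/
def pre {k : ℕ} (a b : Fin (k + 1)) : Prop := a = 0 ∨ a = b

instance {k : ℕ} (a b : Fin (k + 1)) : Decidable (pre a b) :=
  decidable_of_iff (a = 0 ∨ a = b) Iff.rfl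

/-- The componentwise order `⪯` on `S_k^n`. -/
def preV {k n : ℕ} (x y : Fin n → Fin (k + 1)) : Prop := ∀ i, pre (x i) (y i)

/-- The operation `⊓` on `S_k^n`. -/
def sqcap {k n : ℕ} (x y : Fin n → Fin (k + 1)) : Fin n → Fin (k + 1) :=
  fun i => if pre (x i) (y i) ∨ pre (y i) (x i) then min (x i) (y i) else 0

/-- The operation `⊔` on `S_k^n`. -/
def sqcup {k n : ℕ} (x y : Fin n → Fin (k + 1)) : Fin n → Fin (k + 1) :=
  fun i => if pre (x i) (y i) ∨ pre (y i) (x i) then max (x i) (y i) else 0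

/-- A `(⊓,⊔)`-closed subset of `S_k^n`. -/
def closedSet {k n : ℕ} (M : Set (Fin n → Fin (k + 1))) : Prop :=
  M.Nonempty ∧ ∀ x ∈ M, ∀ y ∈ M, sqcap x y ∈ M ∧ sqcup x y ∈ M

/-- Strict version of `⪯`. -/
def strictPreV {k n : ℕ} (x y : Fin n → Fin (k + 1)) : Prop := preV x y ∧ x ≠ y

/-- `m` is the minimum element of `M` with respect to `⪯`. -/
def isMinOf {k n : ℕ} (M : Set (Fin n → Fin (k + 1))) (m : Fin n → Fin (k + 1)) : Prop :=
  m ∈ M ∧ ∀ x ∈ M, preV m x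

/-- `u` is the least upper bound of `S` inside `(M, ⪯)`. -/
def isLUBof {k n : ℕ} (M S : Set (Fin n → Fin (k + 1))) (u : Fin n → Fin (k + 1)) : Prop :=
  u ∈ M ∧ (∀ s ∈ S, preV s u) ∧ ∀ w ∈ M, (∀ s ∈ S, preV s w) → preV u w

/-- `x` is a join-irreducible element of `M`. -/
def joinIrr {k n : ℕ} (M : Set (Fin n → Fin (k + 1))) (x : Fin n → Fin (k + 1)) : Prop :=
  x ∈ M ∧ ¬ isMinOf M x ∧ ¬ isLUBof M {y | y ∈ M ∧ strictPreV y x} x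

/-- A `(⊓,⊔)`-closed set is simple if its minimum element is the all-zero vector. -/
def simpleSet {k n : ℕ} (M : Set (Fin n → Fin (k + 1))) : Prop :=
  isMinOf M (fun _ => 0)

/-- `y` is a lower cover of `x` in `M`. -/
def lowerCover {k n : ℕ} (M : Set (Fin n → Fin (k + 1)))
    (y x : Fin n → Fin (k + 1)) : Prop :=
  y ∈ M ∧ strictPreV y x ∧ ¬ ∃ z ∈ M, strictPreV y z ∧ strictPreV z x

/-- `d` is the differential of `x` in `M` (with respect to some lower cover of `x`). -/
def isDiff {k n : ℕ} (M : Set (Fin n → Fin (k + 1)))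
    (x d : Fin n → Fin (k + 1)) : Prop :=
  ∃ y, lowerCover M y x ∧ ∀ i, d i = if x i ≠ 0 ∧ y i = 0 then x i else 0

/-- The support of `x ∈ S_k^n`. -/
def supp {k n : ℕ} (x : Fin n → Fin (k + 1)) : Set (Fin n) := {i | x i ≠ 0}

/-- `x ⌣ y`: `x` and `y` have no common upper bound in `S_k^n`. -/
def incons {k n : ℕ} (x y : Fin n → Fin (k + 1)) : Prop :=
  ∃ i, x i ≠ 0 ∧ y i ≠ 0 ∧ x i ≠ y i

/-- A simple `(⊓,⊔)`-closed set is normalized if the differential of every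
join-irreducible element has exactly one nonzero component. -/
def normalizedSet {k n : ℕ} (M : Set (Fin n → Fin (k + 1))) : Prop :=
  simpleSet M ∧ ∀ x, joinIrr M x → ∃ d, isDiff M x d ∧ ∃! i, d i ≠ 0

/-- `J_i`: the set of join-irreducible elements of `M` whose differential has
support `{i}`. -/
def Ji {k n : ℕ} (M : Set (Fin n → Fin (k + 1))) (i : Fin n) :
    Set (Fin n → Fin (k + 1)) :=
  {x | joinIrr M x ∧ ∃ d, isDiff M x d ∧ supp d = {i}}

section StarHelpers

variable {k n : ℕ}

lemma pre_refl (a : Fin (k+1)) : pre a a := Or.inr rfl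

lemma pre_zero (a : Fin (k+1)) : pre 0 a := Or.inl rfl

lemma pre_bot {a : Fin (k+1)} (h : pre a 0) : a = 0 := by
  rcases h with h | h <;> exact h

lemma pre_antisymm {a b : Fin (k+1)} (h1 : pre a b) (h2 : pre b a) : a = b := by
  rcases h1 with h | h
  · rcases h2 with h' | h'
    · rw [h, h']
    · exact h'.symm
  · exact h

lemma pre_trans {a b c : Fin (k+1)} (h1 : pre a b) (h2 : pre b c) : pre a c := by
  rcases h1 with h | h
  · exact Or.inl h
  · rcases h2 with h' | h'
    · exact Or.inl (h.trans h')
    · exact Or.inr (h.trans h')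

lemma preV_refl (x : Fin n → Fin (k+1)) : preV x x := fun _ => pre_refl _

lemma preV_trans {x y z : Fin n → Fin (k+1)} (h1 : preV x y) (h2 : preV y z) : preV x z :=
  fun i => pre_trans (h1 i) (h2 i)

lemma preV_antisymm {x y : Fin n → Fin (k+1)} (h1 : preV x y) (h2 : preV y x) : x = y :=
  funext fun i => pre_antisymm (h1 i) (h2 i)

lemma sqcap_comp_self {x y : Fin n → Fin (k+1)} {i : Fin n} (h : x i = y i) :
    sqcap x y i = x i := by
  simp only [sqcap]
  rw [if_pos (show pre (x i) (y i) ∨ pre (y i) (x i) from Or.inl (Or.inr h)), h, min_self]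

lemma sqcap_comp_zero_left {x y : Fin n → Fin (k+1)} {i : Fin n} (h : x i = 0) :
    sqcap x y i = 0 := by
  simp only [sqcap]
  rw [if_pos (show pre (x i) (y i) ∨ pre (y i) (x i) from Or.inl (Or.inl h)), h]
  exact min_eq_left (Fin.zero_le _)

lemma sqcap_comp_zero_right {x y : Fin n → Fin (k+1)} {i : Fin n} (h : y i = 0) :
    sqcap x y i = 0 := by
  simp only [sqcap]
  rw [if_pos (show pre (x i) (y i) ∨ pre (y i) (x i) from Or.inr (Or.inl h)), h]
  exact min_eq_right (Fin.zero_le _)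

lemma sqcap_comp_not {x y : Fin n → Fin (k+1)} {i : Fin n}
    (h1 : ¬ pre (x i) (y i)) (h2 : ¬ pre (y i) (x i)) : sqcap x y i = 0 := by
  simp only [sqcap]
  rw [if_neg (show ¬(pre (x i) (y i) ∨ pre (y i) (x i)) from fun h => h.elim h1 h2)]

lemma sqcup_comp_zero_left {x y : Fin n → Fin (k+1)} {i : Fin n} (h : x i = 0) :
    sqcup x y i = y i := by
  simp only [sqcup]
  rw [if_pos (show pre (x i) (y i) ∨ pre (y i) (x i) from Or.inl (Or.inl h)), h]
  exact max_eq_right (Fin.zero_le _)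

lemma sqcup_comp_not {x y : Fin n → Fin (k+1)} {i : Fin n}
    (h1 : ¬ pre (x i) (y i)) (h2 : ¬ pre (y i) (x i)) : sqcup x y i = 0 := by
  simp only [sqcup]
  rw [if_neg (show ¬(pre (x i) (y i) ∨ pre (y i) (x i)) from fun h => h.elim h1 h2)]

lemma pre_sqcap_left (x y : Fin n → Fin (k+1)) : preV (sqcap x y) x := by
  intro i
  by_cases hx : x i = 0
  · rw [sqcap_comp_zero_left hx, hx]
    exact pre_refl _
  by_cases hy : y i = 0
  · rw [sqcap_comp_zero_right hy]
    exact pre_zero _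
  by_cases hxy : x i = y i
  · rw [sqcap_comp_self hxy]
    exact pre_refl _
  · rw [sqcap_comp_not (fun h => h.elim hx hxy) (fun h => h.elim hy (fun h' => hxy h'.symm))]
    exact pre_zero _

lemma pre_sqcap_right (x y : Fin n → Fin (k+1)) : preV (sqcap x y) y := by
  intro i
  by_cases hx : x i = 0
  · rw [sqcap_comp_zero_left hx]
    exact pre_zero _
  by_cases hy : y i = 0
  · rw [sqcap_comp_zero_right hy, hy]
    exact pre_refl _
  by_cases hxy : x i = y i
  · rw [sqcap_comp_self hxy, hxy]
    exact pre_refl _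
  · rw [sqcap_comp_not (fun h => h.elim hx hxy) (fun h => h.elim hy (fun h' => hxy h'.symm))]
    exact pre_zero _

lemma sqcup_bounds {x y w : Fin n → Fin (k+1)} (hx : preV x w) (hy : preV y w) :
    preV x (sqcup x y) ∧ preV y (sqcup x y) ∧ preV (sqcup x y) w := by
  have H : ∀ i, pre (x i) (sqcup x y i) ∧ pre (y i) (sqcup x y i) ∧ pre (sqcup x y i) (w i) := by
    intro i
    by_cases hx0 : x i = 0
    · rw [sqcup_comp_zero_left hx0]
      exact ⟨Or.inl hx0, pre_refl _, hy i⟩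
    by_cases hy0 : y i = 0
    · have hv : sqcup x y i = x i := by
        simp only [sqcup]
        rw [if_pos (show pre (x i) (y i) ∨ pre (y i) (x i) from Or.inr (Or.inl hy0)), hy0]
        exact max_eq_left (Fin.zero_le _)
      rw [hv]
      exact ⟨pre_refl _, Or.inl hy0, hx i⟩
    · have hxw := (hx i).resolve_left hx0
      have hyw := (hy i).resolve_left hy0
      have hxy : x i = y i := hxw.trans hyw.symm
      have hv : sqcup x y i = x i := by
        simp only [sqcup]
        rw [if_pos (show pre (x i) (y i) ∨ pre (y i) (x i) from Or.inl (Or.inr hxy)), ← hxy, max_self]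
      rw [hv]
      exact ⟨pre_refl _, Or.inr hxy.symm, hx i⟩
  exact ⟨fun i => (H i).1, fun i => (H i).2.1, fun i => (H i).2.2⟩

/-- number of nonzero coordinates -/
def nsupp {k n : ℕ} (x : Fin n → Fin (k+1)) : ℕ :=
  (Finset.univ.filter fun l => x l ≠ 0).card

lemma nsupp_le (x : Fin n → Fin (k+1)) : nsupp x ≤ n := by
  have := Finset.card_filter_le (Finset.univ : Finset (Fin n)) (fun l => x l ≠ 0)
  simpa [nsupp] using this

lemma nsupp_lt {x y : Fin n → Fin (k+1)} (h : strictPreV x y) : nsupp x < nsupp y := by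
  obtain ⟨hle, hne⟩ := h
  apply Finset.card_lt_card
  have hsub : (Finset.univ.filter fun l => x l ≠ 0) ⊆ (Finset.univ.filter fun l => y l ≠ 0) := by
    intro l hl
    simp only [Finset.mem_filter, Finset.mem_univ, true_and] at hl ⊢
    intro hy0
    exact hl (((hle l).resolve_left hl).trans hy0)
  obtain ⟨l, hl⟩ := Function.ne_iff.mp hne
  have hx0 : x l = 0 := (hle l).resolve_right hl
  have hy0 : y l ≠ 0 := fun h0 => hl (by rw [hx0, h0])
  rw [Finset.ssubset_def]
  refine ⟨hsub, fun hsub2 => ?_⟩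
  have := hsub2 (Finset.mem_filter.mpr ⟨Finset.mem_univ l, hy0⟩)
  exact (Finset.mem_filter.mp this).2 hx0

lemma exists_pre_minimal (Q : Set (Fin n → Fin (k+1))) {z : Fin n → Fin (k+1)} (hz : z ∈ Q) :
    ∃ w, w ∈ Q ∧ preV w z ∧ ∀ u ∈ Q, ¬ strictPreV u w := by
  have key : ∀ N (z : Fin n → Fin (k+1)), z ∈ Q → nsupp z ≤ N →
      ∃ w, w ∈ Q ∧ preV w z ∧ ∀ u ∈ Q, ¬ strictPreV u w := by
    intro N
    induction N with
    | zero =>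
      intro z hz h0
      refine ⟨z, hz, preV_refl _, fun u _ hsu => ?_⟩
      have := nsupp_lt hsu
      omega
    | succ N ih =>
      intro z hz hle
      by_cases h : ∃ u ∈ Q, strictPreV u z
      · obtain ⟨u, hu, hsu⟩ := h
        have hlt := nsupp_lt hsu
        obtain ⟨w, hwQ, hwle, hwmin⟩ := ih u hu (by omega)
        exact ⟨w, hwQ, preV_trans hwle hsu.1, hwmin⟩
      · exact ⟨z, hz, preV_refl _, fun u hu hsu => h ⟨u, hu, hsu⟩⟩
  exact key (nsupp z) z hz le_rfl

lemma exists_pre_maximal (Q : Set (Fin n → Fin (k+1))) {z : Fin n → Fin (k+1)} (hz : z ∈ Q) :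
    ∃ w, w ∈ Q ∧ preV z w ∧ ∀ u ∈ Q, ¬ strictPreV w u := by
  have key : ∀ N (z : Fin n → Fin (k+1)), z ∈ Q → n - nsupp z ≤ N →
      ∃ w, w ∈ Q ∧ preV z w ∧ ∀ u ∈ Q, ¬ strictPreV w u := by
    intro N
    induction N with
    | zero =>
      intro z hz h0
      refine ⟨z, hz, preV_refl _, fun u _ hsu => ?_⟩
      have h1 := nsupp_lt hsu
      have h2 := nsupp_le u
      omega
    | succ N ih =>
      intro z hz hle
      by_cases h : ∃ u ∈ Q, strictPreV z u
      · obtain ⟨u, hu, hsu⟩ := h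
        have h1 := nsupp_lt hsu
        have h2 := nsupp_le z
        obtain ⟨w, hwQ, hwge, hwmax⟩ := ih u hu (by omega)
        exact ⟨w, hwQ, preV_trans hsu.1 hwge, hwmax⟩
      · exact ⟨z, hz, preV_refl _, fun u hu hsu => h ⟨u, hu, hsu⟩⟩
  exact key (n - nsupp z) z hz le_rfl

/-- Lemma B: every strict lower bound of a join-irreducible with differential
supported on `{j}` vanishes at `j`. -/
lemma lowers_coord_zero {M : Set (Fin n → Fin (k+1))} (hM : closedSet M)
    {y d : Fin n → Fin (k+1)} {j : Fin n}
    (hy : joinIrr M y) (hd : isDiff M y d) (hsupp : supp d = {j}) :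
    ∀ z ∈ M, strictPreV z y → z j = 0 := by
  obtain ⟨c, ⟨hcM, hcs, hcnb⟩, hcd⟩ := hd
  have hdj : d j ≠ 0 := by
    rw [Set.ext_iff] at hsupp
    exact (hsupp j).mpr rfl
  have hyc : y j ≠ 0 ∧ c j = 0 := by
    by_contra hcon
    apply hdj
    rw [hcd j, if_neg hcon]
  intro z hzM hzy
  obtain ⟨hzu, hcu, huy⟩ := sqcup_bounds hzy.1 hcs.1
  have huM : sqcup z c ∈ M := (hM.2 z hzM c hcM).2
  by_cases huy' : sqcup z c = y
  · exfalso
    apply hy.2.2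
    refine ⟨hy.1, fun s hs => hs.2.1, fun w hwM hub => ?_⟩
    have hzw := hub z ⟨hzM, hzy⟩
    have hcw := hub c ⟨hcM, hcs⟩
    have h3 := (sqcup_bounds hzw hcw).2.2
    rw [huy'] at h3
    exact h3
  · have huc : sqcup z c = c := by
      by_contra hne
      exact hcnb ⟨sqcup z c, huM, ⟨hcu, fun he => hne he.symm⟩, ⟨huy, huy'⟩⟩
    have h2 : pre (z j) (c j) := huc ▸ hzu j
    rw [hyc.2] at h2
    exact pre_bot h2

/-- Lemma A: below any element of `M` with nonzero `j`-th coordinate there is an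
element of `J_j`, all of whose strict lower bounds vanish at `j`. -/
lemma exists_Ji_below {M : Set (Fin n → Fin (k+1))} (hM : closedSet M)
    (hnorm : normalizedSet M) {j : Fin n} {z₀ : Fin n → Fin (k+1)}
    (hz : z₀ ∈ M) (hj : z₀ j ≠ 0) :
    ∃ w, w ∈ Ji M j ∧ preV w z₀ ∧ ∀ u ∈ M, strictPreV u w → u j = 0 := by
  have h0M : (fun _ => (0 : Fin (k+1))) ∈ M := hnorm.1.1
  obtain ⟨w, ⟨hwM, hwz, hwj⟩, -, hwmin⟩ :=
    exists_pre_minimal {w | w ∈ M ∧ preV w z₀ ∧ w j ≠ 0} ⟨hz, preV_refl _, hj⟩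
  have hlow : ∀ u ∈ M, strictPreV u w → u j = 0 := by
    intro u huM hus
    by_contra huj
    exact hwmin u ⟨huM, preV_trans hus.1 hwz, huj⟩ hus
  have h0L : (fun _ => (0 : Fin (k+1))) ∈ {z | z ∈ M ∧ strictPreV z w} :=
    ⟨h0M, fun i => pre_zero _, fun he => hwj ((congrFun he j).symm)⟩
  obtain ⟨s, ⟨hsM, hsw⟩, -, hsmax⟩ := exists_pre_maximal {z | z ∈ M ∧ strictPreV z w} h0L
  have hsj : s j = 0 := hlow s hsM hsw
  have hmax : ∀ z ∈ M, strictPreV z w → preV z s := by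
    intro z hzM hzw
    obtain ⟨hzu, hsu, huw⟩ := sqcup_bounds hzw.1 hsw.1
    have huM : sqcup z s ∈ M := (hM.2 z hzM s hsM).2
    have huj : sqcup z s j = 0 := by
      rw [sqcup_comp_zero_left (hlow z hzM hzw)]
      exact hsj
    have hne : sqcup z s ≠ w := fun he => hwj (by rw [← he]; exact huj)
    have heqs : sqcup z s = s := by
      by_contra hne2
      exact hsmax _ ⟨huM, huw, hne⟩ ⟨hsu, fun he => hne2 he.symm⟩
    exact heqs ▸ hzu
  have hJI : joinIrr M w := by
    refine ⟨hwM, ?_, ?_⟩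
    · rintro ⟨-, hmin⟩
      exact hwj (pre_bot (hmin _ h0M j))
    · rintro ⟨-, -, hlub⟩
      have h1 : preV w s := hlub s hsM (fun t ht => hmax t ht.1 ht.2)
      have heq : w = s := preV_antisymm h1 hsw.1
      exact hwj (by rw [heq]; exact hsj)
  have hcover : lowerCover M s w := by
    refine ⟨hsM, hsw, ?_⟩
    rintro ⟨z, hzM, hsz, hzw⟩
    exact hsz.2 (preV_antisymm hsz.1 (hmax z hzM hzw))
  have hdiff : isDiff M w (fun l => if w l ≠ 0 ∧ s l = 0 then w l else 0) :=
    ⟨s, hcover, fun _ => rfl⟩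
  obtain ⟨d', hdiff', l₀, hl₀, huniq⟩ := hnorm.2 w hJI
  obtain ⟨c', hcover', hd'⟩ := hdiff'
  have hc's : c' = s := by
    have h1 : preV c' s := hmax c' hcover'.1 hcover'.2.1
    by_contra hne
    exact hcover'.2.2 ⟨s, hsM, ⟨h1, hne⟩, hsw⟩
  have hdd : d' = (fun l => if w l ≠ 0 ∧ s l = 0 then w l else 0) := by
    funext l
    rw [hd' l, hc's]
  have hdj : (if w j ≠ 0 ∧ s j = 0 then w j else 0) ≠ 0 := by
    rw [if_pos ⟨hwj, hsj⟩]
    exact hwj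
  have hsupp : supp (fun l => if w l ≠ 0 ∧ s l = 0 then w l else 0) = {j} := by
    ext l
    simp only [supp, Set.mem_setOf_eq, Set.mem_singleton_iff]
    constructor
    · intro hl
      have h1 : l = l₀ := huniq l (by rw [hdd]; exact hl)
      have h2 : j = l₀ := huniq j (by rw [hdd]; exact hdj)
      rw [h1, h2]
    · intro hl
      rw [hl]
      exact hdj
  exact ⟨w, ⟨hJI, _, hdiff, hsupp⟩, hwz, hlow⟩

end StarHelpers
/-- Property (*): in a normalized `(⊓,⊔)`-closed set, if `x' ∈ J_i` lies strictly
below some `y ∈ J_j` (`i ≠ j`), then every other `x ∈ J_i` lies strictly above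
some `y' ∈ J_j` different from `y`. -/
theorem normalized_star_property (k n : ℕ) (hk : 0 < k) (hn : 0 < n)
    (M : Set (Fin n → Fin (k + 1))) (hM : closedSet M) (hnorm : normalizedSet M)
    (i j : Fin n) (hij : i ≠ j)
    (x' y : Fin n → Fin (k + 1)) (hx' : x' ∈ Ji M i) (hy : y ∈ Ji M j)
    (hlt : strictPreV x' y)
    (x : Fin n → Fin (k + 1)) (hx : x ∈ Ji M i) (hxx : x ≠ x') :
    ∃ y', y' ∈ Ji M j ∧ y' ≠ y ∧ strictPreV y' x := by
  obtain ⟨hxJ, dx, hdx, hdxs⟩ := hx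
  obtain ⟨hx'J, dx', hdx', hdx's⟩ := hx'
  obtain ⟨hyJ, dy, hdy, hdys⟩ := hy
  have hxM : x ∈ M := hxJ.1
  have hx'M : x' ∈ M := hx'J.1
  have hyM : y ∈ M := hyJ.1
  have coord_ne : ∀ (z dz : Fin n → Fin (k+1)) (l : Fin n),
      isDiff M z dz → supp dz = {l} → z l ≠ 0 := by
    rintro z dz l ⟨c, hc, hcd⟩ hs
    have hdl : dz l ≠ 0 := by
      rw [Set.ext_iff] at hs
      exact (hs l).mpr rfl
    by_contra hz0
    apply hdl
    rw [hcd l, if_neg (show ¬(z l ≠ 0 ∧ c l = 0) from fun hcon => hcon.1 hz0)]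
  have hxi : x i ≠ 0 := coord_ne x dx i hdx hdxs
  have hx'i : x' i ≠ 0 := coord_ne x' dx' i hdx' hdx's
  have hyj : y j ≠ 0 := coord_ne y dy j hdy hdys
  have hxlow := lowers_coord_zero hM hxJ hdx hdxs
  have hx'low := lowers_coord_zero hM hx'J hdx' hdx's
  have hylow := lowers_coord_zero hM hyJ hdy hdys
  have hyi : y i = x' i := ((hlt.1 i).resolve_left hx'i).symm
  have hyi0 : y i ≠ 0 := by rw [hyi]; exact hx'i
  -- distinct elements of `J_i` differ at coordinate `i`
  have hxxi : x i ≠ x' i := by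
    intro heq
    have haM : sqcap x x' ∈ M := (hM.2 x hxM x' hx'M).1
    have hax : preV (sqcap x x') x := pre_sqcap_left x x'
    have hax' : preV (sqcap x x') x' := pre_sqcap_right x x'
    have hai : sqcap x x' i = x i := sqcap_comp_self heq
    by_cases hax2 : sqcap x x' = x
    · have h1 : preV x x' := hax2 ▸ hax'
      exact hxi (hx'low x hxM ⟨h1, hxx⟩)
    · have h1 := hxlow (sqcap x x') haM ⟨hax, hax2⟩
      rw [hai] at h1
      exact hxi h1
  have hxyi : x i ≠ y i := by rw [hyi]; exact hxxi
  have hnc1 : ¬ pre (x i) (y i) := fun h => h.elim hxi hxyi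
  have hnc2 : ¬ pre (y i) (x i) := fun h => h.elim hyi0 (fun he => hxyi he.symm)
  -- `x j ≠ 0`
  have hxj : x j ≠ 0 := by
    intro hxj0
    have hgM : sqcup x y ∈ M := (hM.2 x hxM y hyM).2
    have hgj : sqcup x y j = y j := sqcup_comp_zero_left hxj0
    have hgi : sqcup x y i = 0 := sqcup_comp_not hnc1 hnc2
    have htM : sqcap (sqcup x y) y ∈ M := (hM.2 _ hgM y hyM).1
    have hty : preV (sqcap (sqcup x y) y) y := pre_sqcap_right _ y
    have htj : sqcap (sqcup x y) y j = y j := (sqcap_comp_self hgj).trans hgj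
    have hti : sqcap (sqcup x y) y i = 0 := sqcap_comp_zero_left hgi
    have hne : sqcap (sqcup x y) y ≠ y := fun he => hyi0 (by rw [← he]; exact hti)
    have h1 := hylow _ htM ⟨hty, hne⟩
    rw [htj] at h1
    exact hyj h1
  -- get `w ∈ J_j` below `x`
  obtain ⟨w, hwJi, hwx, hwlow⟩ := exists_Ji_below hM hnorm hxM hxj
  have hwnx : w ≠ x := by
    intro he
    obtain ⟨c, hcc, hcd⟩ := hdx
    have hdxj : dx j = 0 := by
      by_contra h
      have h1 : j ∈ supp dx := h
      rw [hdxs] at h1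
      exact hij (Set.mem_singleton_iff.mp h1).symm
    have hcj : c j ≠ 0 := by
      intro hc0
      have h1 : dx j = x j := by rw [hcd j, if_pos ⟨hxj, hc0⟩]
      exact hxj (by rw [← h1, hdxj])
    have h2 : strictPreV c w := by rw [he]; exact hcc.2.1
    exact hcj (hwlow c hcc.1 h2)
  have hwy : w ≠ y := by
    intro he
    have h1 : preV y x := he ▸ hwx
    exact hxyi ((h1 i).resolve_left hyi0).symm
  exact ⟨w, hwJi, hwy, hwx, hwnx⟩
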